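/- arXiv:1204.2931 — 2 statements merged into one kernel-verified Lean document; each statement's English description precedes it below -/
import Mathlib

section
/- Let Z = (Z_1,...,Z_M) be a binary string. If Z has at least 2n-1 flips (indices i with Z_i ≠ Z_{i+1}), then every binary word of length n occurs as a (not necessarily contiguous) subsequence of Z. -/
private lemma stmt_0_aux (Z : ℕ → Bool) :
    ∀ n a M, 2 * n - 1 ≤ ((Finset.Ico a M).filter (fun i => Z i ≠ Z (i + 1))).card →
    ∀ w : Fin n → Bool, ∃ φ : Fin n → ℕ, StrictMono φ ∧ (∀ k, a ≤ φ k ∧ φ k ≤ M) ∧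
      ∀ k, Z (φ k) = w k := by
  intro n
  induction n with
  | zero =>
    intro a M _ w
    exact ⟨Fin.elim0, fun x => x.elim0, fun k => k.elim0, fun k => k.elim0⟩
  | succ n ih =>
    intro a M h w
    set S := (Finset.Ico a M).filter (fun i => Z i ≠ Z (i + 1)) with hSdef
    have hcard : 1 ≤ S.card := le_trans (by omega) h
    have hne : S.Nonempty := Finset.card_pos.mp hcard
    set i := S.min' hne with hidef
    have hiS : i ∈ S := S.min'_mem hne
    have hmin : ∀ j ∈ S, i ≤ j := fun j hj => S.min'_le j hj
    obtain ⟨hiI, hflip⟩ := Finset.mem_filter.mp hiS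
    rw [Finset.mem_Ico] at hiI
    set p := if Z i = w 0 then i else i + 1 with hpdef
    have hZp : Z p = w 0 := by
      rw [hpdef]
      split
      · assumption
      · rename_i hne'
        revert hflip hne'
        cases Z i <;> cases Z (i + 1) <;> cases w 0 <;> simp
    have hpi : i ≤ p ∧ p ≤ i + 1 := by rw [hpdef]; split <;> omega
    have hsub : S ⊆ Finset.Icc i p ∪
        (Finset.Ico (p + 1) M).filter (fun j => Z j ≠ Z (j + 1)) := by
      intro j hj
      have hjm := hmin j hj
      obtain ⟨hjI, hjf⟩ := Finset.mem_filter.mp hj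
      rw [Finset.mem_Ico] at hjI
      rcases le_or_gt j p with hc | hc
      · exact Finset.mem_union_left _ (Finset.mem_Icc.mpr ⟨hjm, hc⟩)
      · exact Finset.mem_union_right _
          (Finset.mem_filter.mpr ⟨Finset.mem_Ico.mpr ⟨hc, hjI.2⟩, hjf⟩)
    have hcard2 := (Finset.card_le_card hsub).trans (Finset.card_union_le _ _)
    rw [Nat.card_Icc] at hcard2
    have hT : 2 * n - 1 ≤
        ((Finset.Ico (p + 1) M).filter (fun j => Z j ≠ Z (j + 1))).card := by
      omega
    obtain ⟨φ', hmono, hbound, hval⟩ := ih (p + 1) M hT (fun k => w k.succ)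
    refine ⟨Fin.cons p φ', ?_, ?_, ?_⟩
    · intro x y hxy
      induction y using Fin.cases with
      | zero => exact absurd hxy (Fin.not_lt_zero x)
      | succ j =>
        induction x using Fin.cases with
        | zero =>
          simp only [Fin.cons_zero, Fin.cons_succ]
          exact lt_of_lt_of_le (Nat.lt_succ_self p) (hbound j).1
        | succ k =>
          simp only [Fin.cons_succ]
          exact hmono (Fin.succ_lt_succ_iff.mp hxy)
    · intro k
      induction k using Fin.cases with
      | zero =>
        simp only [Fin.cons_zero]
        constructor <;> omega
      | succ j =>
        simp only [Fin.cons_succ]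
        have := hbound j
        constructor <;> omega
    · intro k
      induction k using Fin.cases with
      | zero => simpa using hZp
      | succ j => simpa using hval j

/-- If a binary string `Z` (positions `1,...,M`) has at least `2n-1` flips, every binary
word of length `n` occurs as a subsequence. -/
theorem stmt_0 (M n : ℕ) (Z : ℕ → Bool)
    (hflips : 2 * n - 1 ≤ ((Finset.Ico 1 M).filter (fun i => Z i ≠ Z (i + 1))).card)
    (w : Fin n → Bool) :
    ∃ φ : Fin n → ℕ, StrictMono φ ∧ (∀ k, 1 ≤ φ k ∧ φ k ≤ M) ∧ ∀ k, Z (φ k) = w k :=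
  stmt_0_aux Z n 1 M hflips w
end

section
/- Let m > 0, j ≥ 0 an integer, and set m' = m − 2^{−(j+1)}, assumed positive. Let U_1,...,U_k be i.i.d. exponential random variables with rate m and let S = ∑_{i=1}^k (1 + U_i). Then for all x ≥ 0, P(S > x) ≤ (m · 2^{j+1} · e^{m'})^k · e^{−x m'}. -/
open MeasureTheory ProbabilityTheory Real Set

lemma exp_tail_lintegral {Ω : Type*} [MeasurableSpace Ω] (μ : Measure Ω)
    [IsProbabilityMeasure μ] {m t : ℝ} (ht : 0 < t) (htm : t < m)
    (U : Ω → ℝ) (hU : Measurable U)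
    (hexp : ∀ x : ℝ, 0 ≤ x → μ {ω | x < U ω} = ENNReal.ofReal (Real.exp (-m * x))) :
    ∫⁻ ω, ENNReal.ofReal (Real.exp (t * U ω)) ∂μ ≤ ENNReal.ofReal (m / (m - t)) := by
  have hm : 0 < m := ht.trans htm
  have hmt : 0 < m - t := by linarith
  have hmeas : AEMeasurable (fun ω => Real.exp (t * U ω)) μ :=
    ((hU.const_mul t).exp).aemeasurable
  rw [lintegral_eq_lintegral_meas_lt μ (ae_of_all _ fun ω => (Real.exp_pos _).le) hmeas]
  have hsplit : Ioi (0:ℝ) = Ioc 0 1 ∪ Ioi 1 := (Ioc_union_Ioi_eq_Ioi (by norm_num)).symm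
  rw [hsplit, lintegral_union measurableSet_Ioi (Ioc_disjoint_Ioi le_rfl)]
  have h1 : ∫⁻ s in Ioc (0:ℝ) 1, μ {a | s < Real.exp (t * U a)} ≤ 1 := by
    calc ∫⁻ s in Ioc (0:ℝ) 1, μ {a | s < Real.exp (t * U a)}
        ≤ ∫⁻ _ in Ioc (0:ℝ) 1, 1 := lintegral_mono fun s => prob_le_one
      _ = 1 := by simp [Real.volume_Ioc]
  have h2 : ∫⁻ s in Ioi (1:ℝ), μ {a | s < Real.exp (t * U a)}
      = ENNReal.ofReal (t / (m - t)) := by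
    have hc : -(m / t) < -1 := by
      rw [neg_lt_neg_iff]
      exact (one_lt_div ht).2 htm
    have hcongr : ∫⁻ s in Ioi (1:ℝ), μ {a | s < Real.exp (t * U a)}
        = ∫⁻ s in Ioi (1:ℝ), ENNReal.ofReal (s ^ (-(m / t))) := by
      refine setLIntegral_congr_fun measurableSet_Ioi (fun s hs => ?_)
      have hs1 : (1:ℝ) < s := hs
      have hs0 : (0:ℝ) < s := by linarith
      have hlog : 0 ≤ Real.log s / t := by
        apply div_nonneg _ ht.le
        exact Real.log_nonneg hs1.le
      have hset : {a | s < Real.exp (t * U a)} = {a | Real.log s / t < U a} := by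
        ext a
        simp only [mem_setOf_eq]
        rw [div_lt_iff₀ ht, mul_comm (U a) t]
        exact (Real.log_lt_iff_lt_exp hs0).symm
      rw [hset, hexp _ hlog]
      have harg : -m * (Real.log s / t) = Real.log s * -(m / t) := by ring
      rw [harg, ← Real.rpow_def_of_pos hs0]
    rw [hcongr]
    rw [← ofReal_integral_eq_lintegral_ofReal
      (integrableOn_Ioi_rpow_of_lt hc one_pos)
      ((ae_restrict_iff' measurableSet_Ioi).2 (ae_of_all _ fun s hs =>
        Real.rpow_nonneg (by linarith [mem_Ioi.1 hs]) _))]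
    congr 1
    rw [integral_Ioi_rpow_of_lt hc one_pos, Real.one_rpow]
    have hne : -(m / t) + 1 ≠ 0 := by
      have h1 : 1 < m / t := (one_lt_div ht).2 htm
      intro h; linarith
    rw [div_eq_div_iff hne hmt.ne']
    field_simp
    ring
  refine le_trans (add_le_add h1 h2.le) (le_of_eq ?_)
  rw [← ENNReal.ofReal_one, ← ENNReal.ofReal_add zero_le_one (div_nonneg ht.le hmt.le)]
  congr 1
  field_simp
  ring

lemma exp_integrable_and_bound {Ω : Type*} [MeasurableSpace Ω] (μ : Measure Ω)
    [IsProbabilityMeasure μ] {m t : ℝ} (ht : 0 < t) (htm : t < m)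
    (U : Ω → ℝ) (hU : Measurable U)
    (hexp : ∀ x : ℝ, 0 ≤ x → μ {ω | x < U ω} = ENNReal.ofReal (Real.exp (-m * x))) :
    Integrable (fun ω => Real.exp (t * U ω)) μ ∧
      ∫ ω, Real.exp (t * U ω) ∂μ ≤ m / (m - t) := by
  have hmt : 0 < m - t := by linarith
  have key := exp_tail_lintegral μ ht htm U hU hexp
  have hmeas : AEStronglyMeasurable (fun ω => Real.exp (t * U ω)) μ :=
    ((hU.const_mul t).exp).aestronglyMeasurable
  have hfin : HasFiniteIntegral (fun ω => Real.exp (t * U ω)) μ := by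
    show ∫⁻ ω, (‖Real.exp (t * U ω)‖₊ : ENNReal) ∂μ < ⊤
    calc ∫⁻ ω, (‖Real.exp (t * U ω)‖₊ : ENNReal) ∂μ
        = ∫⁻ ω, ENNReal.ofReal (Real.exp (t * U ω)) ∂μ := by
          refine lintegral_congr fun ω => ?_
          exact Real.enorm_eq_ofReal (Real.exp_pos _).le
      _ ≤ ENNReal.ofReal (m / (m - t)) := key
      _ < ⊤ := ENNReal.ofReal_lt_top
  refine ⟨⟨hmeas, hfin⟩, ?_⟩
  rw [integral_eq_lintegral_of_nonneg_ae (ae_of_all _ fun ω => (Real.exp_pos _).le) hmeas]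
  calc (∫⁻ ω, ENNReal.ofReal (Real.exp (t * U ω)) ∂μ).toReal
      ≤ (ENNReal.ofReal (m / (m - t))).toReal :=
        ENNReal.toReal_mono ENNReal.ofReal_ne_top key
    _ = m / (m - t) := ENNReal.toReal_ofReal (div_nonneg (by linarith) hmt.le)

/-- Tail bound for `S = ∑_{i=1}^k (1 + U_i)` with `U_i` i.i.d. exponential of rate `m`:
for `m' = m - 2^{-(j+1)} > 0`, `P(S > x) ≤ (m 2^{j+1} e^{m'})^k e^{-x m'}` for all `x ≥ 0`. -/
theorem stmt_8 {Ω : Type*} [MeasurableSpace Ω] (μ : Measure Ω) [IsProbabilityMeasure μ]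
    (m : ℝ) (j k : ℕ) (hm : 0 < m) (hm' : 0 < m - (2 : ℝ) ^ (-((j : ℤ) + 1)))
    (U : Fin k → Ω → ℝ) (hmeas : ∀ i, Measurable (U i))
    (hiid : iIndepFun U μ)
    (hexp : ∀ i, ∀ x : ℝ, 0 ≤ x → μ {ω | x < U i ω} = ENNReal.ofReal (Real.exp (-m * x))) :
    ∀ x : ℝ, 0 ≤ x →
      μ {ω | x < ∑ i, (1 + U i ω)} ≤
        ENNReal.ofReal
          ((m * 2 ^ (j + 1) * Real.exp (m - (2 : ℝ) ^ (-((j : ℤ) + 1)))) ^ k *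
            Real.exp (-x * (m - (2 : ℝ) ^ (-((j : ℤ) + 1))))) := by
  intro x hx
  set c : ℝ := (2 : ℝ) ^ (-((j : ℤ) + 1)) with hc
  set t : ℝ := m - c with htdef
  have hcpos : 0 < c := by positivity
  have ht : 0 < t := hm'
  have htm : t < m := by simp only [htdef]; linarith
  have hcinv : c = ((2:ℝ) ^ (j + 1))⁻¹ := by
    rw [hc, show -((j:ℤ)+1) = -((j+1:ℕ):ℤ) by push_cast; ring, zpow_neg, zpow_natCast]
  have hmtc : m - t = c := by rw [htdef]; ring
  have hmc : m / (m - t) = m * 2 ^ (j + 1) := by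
    rw [hmtc, hcinv, div_eq_mul_inv, inv_inv]
  -- the shifted variables
  set X : Fin k → Ω → ℝ := fun i ω => 1 + U i ω with hX
  have hXmeas : ∀ i, Measurable (X i) := fun i => (measurable_const.add (hmeas i))
  have hXindep : iIndepFun X μ :=
    hiid.comp (fun _ y => 1 + y) (fun _ => measurable_const.add measurable_id)
  have hUint : ∀ i, Integrable (fun ω => Real.exp (t * U i ω)) μ ∧
      ∫ ω, Real.exp (t * U i ω) ∂μ ≤ m / (m - t) := fun i =>
    exp_integrable_and_bound μ ht htm (U i) (hmeas i) (hexp i)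
  have hXint : ∀ i, Integrable (fun ω => Real.exp (t * X i ω)) μ := by
    intro i
    have h : (fun ω => Real.exp (t * X i ω)) = fun ω => Real.exp t * Real.exp (t * U i ω) := by
      funext ω
      simp only [hX]
      rw [← Real.exp_add]
      congr 1
      ring
    rw [h]
    exact ((hUint i).1).const_mul _
  have hmgfX : ∀ i, mgf (X i) μ t ≤ Real.exp t * (m * 2 ^ (j + 1)) := by
    intro i
    unfold mgf
    have h : (fun ω => Real.exp (t * X i ω)) = fun ω => Real.exp t * Real.exp (t * U i ω) := by
      funext ω
      simp only [hX]
      rw [← Real.exp_add]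
      congr 1
      ring
    rw [h, integral_const_mul]
    have := (hUint i).2
    rw [hmc] at this
    exact mul_le_mul_of_nonneg_left this (Real.exp_pos t).le
  -- sum
  have hSint : Integrable (fun ω => Real.exp (t * (∑ i, X i) ω)) μ :=
    hXindep.integrable_exp_mul_sum hXmeas (fun i _ => hXint i)
  have hchern := measure_ge_le_exp_mul_mgf (μ := μ) (X := ∑ i, X i) (t := t) x ht.le hSint
  have hmgfsum : mgf (∑ i, X i) μ t ≤ (Real.exp t * (m * 2 ^ (j + 1))) ^ k := by
    rw [hXindep.mgf_sum hXmeas]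
    calc ∏ i, mgf (X i) μ t ≤ ∏ _i : Fin k, (Real.exp t * (m * 2 ^ (j + 1))) :=
          Finset.prod_le_prod (fun i _ => mgf_nonneg) (fun i _ => hmgfX i)
      _ = (Real.exp t * (m * 2 ^ (j + 1))) ^ k := by
          simp [Finset.prod_const]
  have hsub : {ω | x < ∑ i, (1 + U i ω)} ⊆ {ω | x ≤ (∑ i, X i) ω} := by
    intro ω hω
    simp only [mem_setOf_eq, Finset.sum_apply] at *
    exact le_of_lt hω
  have hfin : μ {ω | x ≤ (∑ i, X i) ω} ≠ ⊤ := measure_ne_top μ _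
  calc μ {ω | x < ∑ i, (1 + U i ω)} ≤ μ {ω | x ≤ (∑ i, X i) ω} := measure_mono hsub
    _ ≤ ENNReal.ofReal ((m * 2 ^ (j + 1) * Real.exp t) ^ k * Real.exp (-x * t)) := by
        rw [← ENNReal.ofReal_toReal hfin]
        apply ENNReal.ofReal_le_ofReal
        calc (μ {ω | x ≤ (∑ i, X i) ω}).toReal
            ≤ Real.exp (-t * x) * mgf (∑ i, X i) μ t := hchern
          _ ≤ Real.exp (-t * x) * (Real.exp t * (m * 2 ^ (j + 1))) ^ k := by
              exact mul_le_mul_of_nonneg_left hmgfsum (Real.exp_pos _).le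
          _ = (m * 2 ^ (j + 1) * Real.exp t) ^ k * Real.exp (-x * t) := by ring_nf
end
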